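/- Let G be a gyrogroup and H an L-subgyrogroup (a subgyrogroup with gyr[a,h](H) = H for all a ∈ G, h ∈ H). Then the left cosets {a ⊕ H : a ∈ G} form a partition of G: they cover G, and any two left cosets are either equal or disjoint. Consequently, if G is finite then |H| divides |G|. -/

import Mathlib

/-!
Writing `a ⊕ H` for the left coset, left gyroassociativity gives `a ⊕ (h ⊕ H) = (a ⊕ h) ⊕ gyr[a,h](H)`.
For `h ∈ H` we have `h ⊕ H = H`, and the L-property gives `gyr[a,h](H) = H`, so `a ⊕ H = (a ⊕ h) ⊕ H`:
every element of a coset generates that coset. Hence two cosets sharing a point coincide. Since left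
translation is injective, every coset is in bijection with `H`, and `G` is the disjoint union of
its cosets, so `|G| = [G : H] · |H|`.
-/

/-- A gyrogroup: a magma with a left identity, left inverses, and
gyroautomorphisms satisfying the left gyroassociative law and the
left loop property. -/
class Gyrogroup (G : Type*) where
  add : G → G → G
  zero : G
  neg : G → G
  gyr : G → G → G → G
  zero_add : ∀ a : G, add zero a = a
  neg_add : ∀ a : G, add (neg a) a = zero
  gyr_add : ∀ a b c d : G, gyr a b (add c d) = add (gyr a b c) (gyr a b d)
  gyr_bijective : ∀ a b : G, Function.Bijective (gyr a b)
  left_gyroassoc : ∀ a b c : G, add a (add b c) = add (add a b) (gyr a b c)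
  left_loop : ∀ a b : G, gyr a b = gyr (add a b) b

open Gyrogroup

theorem Nat.card_dvd_of_fiber_equiv {α β γ : Type*} (f : α → β)
    (e : ∀ b, {a // f a = b} ≃ γ) : Nat.card γ ∣ Nat.card α := by
  have : α ≃ β × γ :=
    (Equiv.sigmaFiberEquiv f).symm.trans
      ((Equiv.sigmaCongrRight e).trans (Equiv.sigmaEquivProd β γ))
  rw [Nat.card_congr this, Nat.card_prod]
  exact dvd_mul_left _ _

namespace Gyrogroup

variable {G : Type*} [Gyrogroup G]

theorem add_left_cancel {a b c : G} (h : add a b = add a c) : b = c := by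
  have h' : add (neg a) (add a b) = add (neg a) (add a c) := by rw [h]
  rw [left_gyroassoc, left_gyroassoc, Gyrogroup.neg_add, Gyrogroup.zero_add,
    Gyrogroup.zero_add] at h'
  exact (gyr_bijective (neg a) a).1 h'

theorem add_left_injective (a : G) : Function.Injective (add a) :=
  fun _ _ => add_left_cancel

theorem gyr_zero_left (a c : G) : gyr zero a c = c := by
  have h := left_gyroassoc zero a c
  rw [Gyrogroup.zero_add, Gyrogroup.zero_add] at h
  exact (add_left_cancel h).symm

theorem gyr_neg_self (a c : G) : gyr (neg a) a c = c := by
  rw [left_loop, Gyrogroup.neg_add, gyr_zero_left]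

theorem neg_add_cancel_left (a b : G) : add (neg a) (add a b) = b := by
  rw [left_gyroassoc, Gyrogroup.neg_add, Gyrogroup.zero_add, gyr_neg_self]

theorem add_neg_cancel (a : G) : add a (neg a) = zero := by
  have h := neg_add_cancel_left (neg a) (add a (neg a))
  rw [neg_add_cancel_left a (neg a)] at h
  rw [← h, Gyrogroup.neg_add]

theorem add_zero (a : G) : add a zero = a := by
  apply add_left_cancel (a := neg a)
  rw [neg_add_cancel_left, Gyrogroup.neg_add]

theorem gyr_self_neg (a c : G) : gyr a (neg a) c = c := by
  rw [left_loop, add_neg_cancel, gyr_zero_left]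

theorem add_neg_cancel_left (a b : G) : add a (add (neg a) b) = b := by
  rw [left_gyroassoc, add_neg_cancel, Gyrogroup.zero_add, gyr_self_neg]

def leftCoset (a : G) (S : Set G) : Set G := add a '' S

theorem leftCoset_leftCoset (a h : G) (S : Set G) :
    leftCoset a (leftCoset h S) = leftCoset (add a h) (gyr a h '' S) := by
  simp only [leftCoset, Set.image_image, left_gyroassoc]

noncomputable def leftCosetEquiv (a : G) (S : Set G) : leftCoset a S ≃ S :=
  (Equiv.Set.image (add a) S (add_left_injective a)).symm

section Subgyrogroup

variable {H : Set G} (hadd : ∀ a ∈ H, ∀ b ∈ H, add a b ∈ H) (hneg : ∀ a ∈ H, neg a ∈ H)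
include hadd hneg

theorem zero_mem_of_nonempty (hne : H.Nonempty) : zero ∈ H := by
  obtain ⟨h, hH⟩ := hne
  simpa only [add_neg_cancel] using hadd h hH (neg h) (hneg h hH)

theorem leftCoset_eq_self_of_mem {h : G} (hH : h ∈ H) : leftCoset h H = H := by
  refine (Set.image_subset_iff.2 fun k hk => hadd h hH k hk).antisymm fun k hk => ?_
  exact ⟨add (neg h) k, hadd _ (hneg h hH) k hk, add_neg_cancel_left h k⟩

variable (hL : ∀ a : G, ∀ h ∈ H, gyr a h '' H = H)
include hL

theorem leftCoset_add_of_mem (a : G) {h : G} (hH : h ∈ H) :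
    leftCoset (add a h) H = leftCoset a H := by
  calc leftCoset (add a h) H = leftCoset (add a h) (gyr a h '' H) := by rw [hL a h hH]
    _ = leftCoset a (leftCoset h H) := (leftCoset_leftCoset a h H).symm
    _ = leftCoset a H := by rw [leftCoset_eq_self_of_mem hadd hneg hH]

theorem leftCoset_eq_of_mem {a x : G} (hx : x ∈ leftCoset a H) :
    leftCoset x H = leftCoset a H := by
  obtain ⟨h, hH, rfl⟩ := hx
  exact leftCoset_add_of_mem hadd hneg hL a hH

theorem leftCoset_eq_or_disjoint (a b : G) :
    leftCoset a H = leftCoset b H ∨ Disjoint (leftCoset a H) (leftCoset b H) := by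
  refine or_iff_not_imp_right.2 fun hab => ?_
  obtain ⟨x, hxa, hxb⟩ := Set.not_disjoint_iff.1 hab
  rw [← leftCoset_eq_of_mem hadd hneg hL hxa, leftCoset_eq_of_mem hadd hneg hL hxb]

theorem leftCoset_eq_iff_mem (h0 : zero ∈ H) {a x : G} :
    leftCoset x H = leftCoset a H ↔ x ∈ leftCoset a H :=
  ⟨fun hxa => hxa ▸ ⟨zero, h0, add_zero x⟩, leftCoset_eq_of_mem hadd hneg hL⟩

theorem ncard_dvd_card (hne : H.Nonempty) : H.ncard ∣ Nat.card G := by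
  let cosets := Setoid.ker (leftCoset · H)
  have fiber_equiv (q : Quotient cosets) : {x // Quotient.mk cosets x = q} ≃ H := by
    rw [← q.out_eq]
    refine (Equiv.subtypeEquivRight fun x => ?_).trans (leftCosetEquiv q.out H)
    rw [Quotient.eq, Setoid.ker_def]
    exact leftCoset_eq_iff_mem hadd hneg hL (zero_mem_of_nonempty hadd hneg hne)
  rw [← Nat.card_coe_set_eq]
  exact Nat.card_dvd_of_fiber_equiv _ fiber_equiv

end Subgyrogroup

end Gyrogroup

/-- For an L-subgyrogroup H of G, the left cosets a ⊕ H partition G: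
they cover G and any two are equal or disjoint. Consequently, if G is
finite then |H| divides |G|. -/
theorem L_subgyrogroup_coset_partition {G : Type*} [Gyrogroup G] (H : Set G)
    (hne : H.Nonempty)
    (hadd : ∀ a ∈ H, ∀ b ∈ H, add a b ∈ H)
    (hneg : ∀ a ∈ H, neg a ∈ H)
    (hL : ∀ a : G, ∀ h ∈ H, gyr a h '' H = H) :
    (∀ x : G, ∃ a : G, x ∈ (fun h : G => add a h) '' H) ∧
    (∀ a b : G, (fun h : G => add a h) '' H = (fun h : G => add b h) '' H ∨
      Disjoint ((fun h : G => add a h) '' H) ((fun h : G => add b h) '' H)) ∧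
    (Finite G → H.ncard ∣ Nat.card G) :=
  ⟨fun x => ⟨x, zero, zero_mem_of_nonempty hadd hneg hne, add_zero x⟩,
    leftCoset_eq_or_disjoint hadd hneg hL,
    fun _ => ncard_dvd_card hadd hneg hL hne⟩
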